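/- arXiv:1308.3966 — 4 statements merged into one kernel-verified Lean document; each statement's English description precedes it below -/
import Mathlib

section
/- For the two-asset lognormal model, RHIX equals (exp(ρ σ_1 σ_2 t) − 1)/(exp(σ_1 σ_2 t) − 1), i.e., the ratio of the actual correlation of the two lognormal prices to the comonotonic correlation simplifies to this expression. -/
theorem stmt_3 (t σ₁ σ₂ ρ : ℝ) (ht : 0 < t) (hσ₁ : 0 < σ₁) (hσ₂ : 0 < σ₂)
    (hρ : ρ ∈ Set.Icc (-1 : ℝ) 1) :
    ((Real.exp (ρ * σ₁ * σ₂ * t) - 1) /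
        (Real.sqrt (Real.exp (σ₁ ^ 2 * t) - 1) * Real.sqrt (Real.exp (σ₂ ^ 2 * t) - 1))) /
      ((Real.exp (σ₁ * σ₂ * t) - 1) /
        (Real.sqrt (Real.exp (σ₁ ^ 2 * t) - 1) * Real.sqrt (Real.exp (σ₂ ^ 2 * t) - 1))) =
      (Real.exp (ρ * σ₁ * σ₂ * t) - 1) / (Real.exp (σ₁ * σ₂ * t) - 1) := by
  have h1 : 0 < Real.exp (σ₁ ^ 2 * t) - 1 := by
    have := Real.exp_pos (σ₁ ^ 2 * t)
    nlinarith [Real.add_one_lt_exp (x := σ₁ ^ 2 * t) (by positivity)]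
  have h2 : 0 < Real.exp (σ₂ ^ 2 * t) - 1 := by
    nlinarith [Real.add_one_lt_exp (x := σ₂ ^ 2 * t) (by positivity)]
  have hc : Real.sqrt (Real.exp (σ₁ ^ 2 * t) - 1) * Real.sqrt (Real.exp (σ₂ ^ 2 * t) - 1) ≠ 0 := by
    positivity
  have hb : 0 < Real.exp (σ₁ * σ₂ * t) - 1 := by
    nlinarith [Real.add_one_lt_exp (x := σ₁ * σ₂ * t) (by positivity), mul_pos (mul_pos hσ₁ hσ₂) ht]
  field_simp
end

section
/- For comonotonic random variables X_i^c = F_i^{-1}(U), i = 1, ..., d, with nondegenerate marginals and nonnegative weights w_i not all zero applied to at least two nondegenerate coordinates, the denominator of RHIX, Σ_{i≠j} w_i w_j cov(X_i^c, X_j^c), is strictly positive. -/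
open MeasureTheory ProbabilityTheory Real Filter

noncomputable def cov' {Ω : Type*} [MeasurableSpace Ω] (μ : Measure Ω) (X Y : Ω → ℝ) : ℝ :=
  (∫ ω, X ω * Y ω ∂μ) - (∫ ω, X ω ∂μ) * (∫ ω, Y ω ∂μ)

noncomputable def var' {Ω : Type*} [MeasurableSpace Ω] (μ : Measure Ω) (X : Ω → ℝ) : ℝ :=
  cov' μ X X

noncomputable def corr' {Ω : Type*} [MeasurableSpace Ω] (μ : Measure Ω) (X Y : Ω → ℝ) : ℝ :=
  cov' μ X Y / (Real.sqrt (var' μ X) * Real.sqrt (var' μ Y))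

noncomputable def quantile (ν : Measure ℝ) (p : ℝ) : ℝ := sInf {x | p ≤ cdf ν x}

noncomputable def comono {Ω : Type*} [MeasurableSpace Ω] (μ : Measure Ω) (U : Ω → ℝ) (X : Ω → ℝ) :
    Ω → ℝ :=
  fun ω => quantile (Measure.map X μ) (U ω)

/-!
Put `Xᵢ = Fᵢ⁻¹(U)`. All quantile functions are nondecreasing on `(0, 1)`, so every summand is
nonnegative by Chebyshev's integral inequality, and it suffices that the covariance of a pair
`i ≠ j` with positive weights is positive. Pull everything back to Lebesgue measure on `(0, 1)`
and use Hoeffding's formula `2 cov(f, g) = ∬ (f u - f v) (g u - g v) du dv`: the integrand is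
nonnegative, and it is positive on a rectangle `(b, 1) × (0, a)` of positive area as soon as
neither `f` nor `g` is constant on `(0, 1)`. A quantile function constant on `(0, 1)` would
make its law (the image of Lebesgue measure) a Dirac mass, of variance zero.
-/

open Set Topology

lemma cov'_map {Ω Ω' : Type*} [MeasurableSpace Ω] [MeasurableSpace Ω'] {μ : Measure Ω}
    {φ : Ω → Ω'} (hφ : AEMeasurable φ μ) {f g : Ω' → ℝ}
    (hf : AEStronglyMeasurable f (μ.map φ)) (hg : AEStronglyMeasurable g (μ.map φ)) :
    cov' (μ.map φ) f g = cov' μ (fun ω => f (φ ω)) (fun ω => g (φ ω)) := by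
  simp only [cov', integral_map hφ hf, integral_map hφ hg,
    integral_map hφ (f := fun x => f x * g x) (hf.mul hg)]

section Hoeffding

variable {α : Type*} [MeasurableSpace α] {μ : Measure α} [IsProbabilityMeasure μ] {f g : α → ℝ}

lemma integrable_sub_mul_sub (hf : MemLp f 2 μ) (hg : MemLp g 2 μ) (u : α) :
    Integrable (fun v => (f u - f v) * (g u - g v)) μ :=
  ((memLp_const (f u)).sub hf).integrable_mul ((memLp_const (g u)).sub hg)

lemma integral_sub_mul_sub (hf : MemLp f 2 μ) (hg : MemLp g 2 μ) (u : α) :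
    ∫ v, (f u - f v) * (g u - g v) ∂μ
      = (f u * g u - f u * ∫ v, g v ∂μ) - ((∫ v, f v ∂μ) * g u - ∫ v, f v * g v ∂μ) := by
  have hfi : Integrable f μ := hf.integrable one_le_two
  have hgi : Integrable g μ := hg.integrable one_le_two
  have hfg : Integrable (fun v => f v * g v) μ := hf.integrable_mul hg
  have hu : Integrable (fun v => f u * g u - f u * g v) μ :=
    (integrable_const _).sub (hgi.const_mul _)
  have hv : Integrable (fun v => f v * g u - f v * g v) μ := (hfi.mul_const _).sub hfg
  have hexp : (fun v => (f u - f v) * (g u - g v))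
      = fun v => (f u * g u - f u * g v) - (f v * g u - f v * g v) := by ext v; ring
  rw [hexp, integral_sub hu hv, integral_sub (integrable_const _) (hgi.const_mul _),
    integral_sub (hfi.mul_const _) hfg, integral_const, integral_const_mul, integral_mul_const,
    probReal_univ, one_smul]

lemma integrable_integral_sub_mul_sub (hf : MemLp f 2 μ) (hg : MemLp g 2 μ) :
    Integrable (fun u => ∫ v, (f u - f v) * (g u - g v) ∂μ) μ := by
  simp_rw [integral_sub_mul_sub hf hg]
  exact ((hf.integrable_mul hg).sub ((hf.integrable one_le_two).mul_const _)).sub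
    (((hg.integrable one_le_two).const_mul _).sub (integrable_const _))

lemma two_mul_cov'_eq_integral_integral (hf : MemLp f 2 μ) (hg : MemLp g 2 μ) :
    2 * cov' μ f g = ∫ u, ∫ v, (f u - f v) * (g u - g v) ∂μ ∂μ := by
  have hfi : Integrable f μ := hf.integrable one_le_two
  have hgi : Integrable g μ := hg.integrable one_le_two
  have hfg : Integrable (fun v => f v * g v) μ := hf.integrable_mul hg
  have hu : Integrable (fun u => f u * g u - f u * ∫ v, g v ∂μ) μ := hfg.sub (hfi.mul_const _)
  have hv : Integrable (fun u => (∫ v, f v ∂μ) * g u - ∫ v, f v * g v ∂μ) μ :=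
    (hgi.const_mul _).sub (integrable_const _)
  simp_rw [integral_sub_mul_sub hf hg]
  rw [integral_sub hu hv, integral_sub hfg (hfi.mul_const _),
    integral_sub (hgi.const_mul _) (integrable_const _), integral_const, integral_const_mul,
    integral_mul_const, probReal_univ, one_smul, cov']
  ring

end Hoeffding

lemma integral_pos_of_pos_on {α : Type*} [MeasurableSpace α] {μ : Measure α} {F : α → ℝ}
    (hF : 0 ≤ᵐ[μ] F) (hFi : Integrable F μ) {s : Set α} (hs : μ s ≠ 0)
    (hpos : ∀ x ∈ s, 0 < F x) : 0 < ∫ x, F x ∂μ :=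
  (integral_pos_iff_support_of_nonneg_ae hF hFi).2 <|
    (pos_iff_ne_zero.2 hs).trans_le (measure_mono fun x hx => (hpos x hx).ne')

section Comonotone

variable {α : Type*} [MeasurableSpace α] {μ : Measure α} {s : Set α} {f g : α → ℝ}

lemma integral_sub_mul_sub_nonneg (hfg : MonovaryOn f g s) (hs : ∀ᵐ x ∂μ, x ∈ s) {u : α}
    (hu : u ∈ s) : 0 ≤ ∫ v, (f u - f v) * (g u - g v) ∂μ :=
  integral_nonneg_of_ae <| hs.mono fun _ hv => hfg.sub_mul_sub_nonneg hv hu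

lemma cov'_nonneg_of_monovaryOn [IsProbabilityMeasure μ] (hf : MemLp f 2 μ) (hg : MemLp g 2 μ)
    (hfg : MonovaryOn f g s) (hs : ∀ᵐ x ∂μ, x ∈ s) : 0 ≤ cov' μ f g := by
  have h : 0 ≤ 2 * cov' μ f g := by
    rw [two_mul_cov'_eq_integral_integral hf hg]
    exact integral_nonneg_of_ae <| hs.mono fun _ hu => integral_sub_mul_sub_nonneg hfg hs hu
  linarith

end Comonotone

instance : IsProbabilityMeasure (volume.restrict (Ioo (0 : ℝ) 1)) :=
  ⟨by simp⟩

lemma volume_restrict_Ioo_ne_zero {a b c d : ℝ} (hab : a < b) (h : Ioo a b ⊆ Ioo c d) :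
    volume.restrict (Ioo c d) (Ioo a b) ≠ 0 := by
  rw [Measure.restrict_apply measurableSet_Ioo, inter_eq_self_of_subset_left h, Real.volume_Ioo]
  simpa using hab

lemma cov'_pos_of_monotoneOn {f g : ℝ → ℝ} (hf : MemLp f 2 (volume.restrict (Ioo 0 1)))
    (hg : MemLp g 2 (volume.restrict (Ioo 0 1)))
    (hmf : MonotoneOn f (Ioo 0 1)) (hmg : MonotoneOn g (Ioo 0 1))
    (hnf : ∃ u ∈ Ioo (0 : ℝ) 1, ∃ v ∈ Ioo (0 : ℝ) 1, f u < f v)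
    (hng : ∃ u ∈ Ioo (0 : ℝ) 1, ∃ v ∈ Ioo (0 : ℝ) 1, g u < g v) :
    0 < cov' (volume.restrict (Ioo 0 1)) f g := by
  obtain ⟨u₀, hu₀, v₀, hv₀, hf₀⟩ := hnf
  obtain ⟨u₁, hu₁, v₁, hv₁, hg₁⟩ := hng
  set a := min u₀ u₁
  set b := max v₀ v₁
  have hA : Ioo 0 a ⊆ Ioo 0 1 := Ioo_subset_Ioo le_rfl ((min_le_left _ _).trans hu₀.2.le)
  have hB : Ioo b 1 ⊆ Ioo 0 1 := Ioo_subset_Ioo (hv₀.1.le.trans (le_max_left _ _)) le_rfl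
  have hrect : ∀ u ∈ Ioo b 1, ∀ v ∈ Ioo 0 a, 0 < (f u - f v) * (g u - g v) := by
    intro u hu v hv
    have hvf : f v ≤ f u₀ := hmf (hA hv) hu₀ (hv.2.le.trans (min_le_left _ _))
    have hvg : g v ≤ g u₁ := hmg (hA hv) hu₁ (hv.2.le.trans (min_le_right _ _))
    have huf : f v₀ ≤ f u := hmf hv₀ (hB hu) ((le_max_left _ _).trans hu.1.le)
    have hug : g v₁ ≤ g u := hmg hv₁ (hB hu) ((le_max_right _ _).trans hu.1.le)
    exact mul_pos (by linarith) (by linarith)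
  have hs : ∀ᵐ x ∂(volume.restrict (Ioo (0 : ℝ) 1)), x ∈ Ioo 0 1 :=
    ae_restrict_mem measurableSet_Ioo
  have hfg : MonovaryOn f g (Ioo 0 1) := hmf.monovaryOn hmg
  have h : 0 < 2 * cov' (volume.restrict (Ioo 0 1)) f g := by
    rw [two_mul_cov'_eq_integral_integral hf hg]
    refine integral_pos_of_pos_on (hs.mono fun _ hu => integral_sub_mul_sub_nonneg hfg hs hu)
      (integrable_integral_sub_mul_sub hf hg)
      (volume_restrict_Ioo_ne_zero (max_lt hv₀.2 hv₁.2) hB) fun u hu => ?_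
    exact integral_pos_of_pos_on (hs.mono fun _ hv => hfg.sub_mul_sub_nonneg hv (hB hu))
      (integrable_sub_mul_sub hf hg u) (volume_restrict_Ioo_ne_zero (lt_min hu₀.1 hu₁.1) hA)
      (hrect u hu)
  linarith

section Quantile

variable (ν : Measure ℝ)

lemma quantile_le_iff {p x : ℝ} (hp₀ : 0 < p) (hp₁ : p < 1) :
    quantile ν p ≤ x ↔ p ≤ cdf ν x := by
  set S := {y | p ≤ cdf ν y}
  have hne : S.Nonempty := ((tendsto_cdf_atTop ν).eventually (eventually_ge_nhds hp₁)).exists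
  have hbdd : BddBelow S := by
    obtain ⟨y₀, hy₀⟩ := ((tendsto_cdf_atBot ν).eventually (eventually_lt_nhds hp₀)).exists
    exact ⟨y₀, fun y hy => not_lt.1 fun hlt => (hy.trans (monotone_cdf ν hlt.le)).not_gt hy₀⟩
  refine ⟨fun h => ?_, fun h => csInf_le hbdd h⟩
  -- right continuity of the distribution function puts `sInf S` into `S`
  have hinf : p ≤ cdf ν (sInf S) := by
    refine ge_of_tendsto
      (((cdf ν).right_continuous _).tendsto.mono_left (nhdsWithin_mono _ Ioi_subset_Ici_self)) ?_
    filter_upwards [self_mem_nhdsWithin] with y hy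
    obtain ⟨z, hz, hzy⟩ := exists_lt_of_csInf_lt hne hy
    exact hz.trans (monotone_cdf ν hzy.le)
  exact hinf.trans (monotone_cdf ν h)

lemma monotoneOn_quantile : MonotoneOn (quantile ν) (Ioo 0 1) := fun _ hp _ hq hpq =>
  (quantile_le_iff ν hp.1 hp.2).2 (hpq.trans ((quantile_le_iff ν hq.1 hq.2).1 le_rfl))

lemma aemeasurable_quantile : AEMeasurable (quantile ν) (volume.restrict (Ioo 0 1)) :=
  aemeasurable_restrict_of_monotoneOn measurableSet_Ioo (monotoneOn_quantile ν)

lemma map_quantile_volume_restrict_Ioo [IsProbabilityMeasure ν] :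
    (volume.restrict (Ioo 0 1)).map (quantile ν) = ν := by
  refine Measure.ext_of_Iic _ _ fun x => ?_
  rw [Measure.map_apply_of_aemeasurable (aemeasurable_quantile ν) measurableSet_Iic,
    Measure.restrict_apply' measurableSet_Ioo, ← ofReal_cdf ν x]
  have hpre : quantile ν ⁻¹' Iic x ∩ Ioo 0 1 = Iic (cdf ν x) ∩ Ioo 0 1 := by
    ext p
    simp only [mem_inter_iff, mem_preimage, mem_Iic, and_congr_left_iff]
    exact fun hp => quantile_le_iff ν hp.1 hp.2
  rw [hpre]
  rcases (cdf_le_one ν x).lt_or_eq with hlt | heq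
  · have : Iic (cdf ν x) ∩ Ioo 0 1 = Ioc 0 (cdf ν x) := by
      ext p
      simp only [mem_inter_iff, mem_Iic, mem_Ioo, mem_Ioc]
      exact ⟨fun h => ⟨h.2.1, h.1⟩, fun h => ⟨h.2, h.1, h.2.trans_lt hlt⟩⟩
    rw [this, Real.volume_Ioc, sub_zero]
  · rw [inter_eq_self_of_subset_right fun p hp => heq ▸ hp.2.le, Real.volume_Ioo, heq, sub_zero]

lemma memLp_quantile [IsProbabilityMeasure ν] (hν : MemLp (fun x : ℝ => x) 2 ν) :
    MemLp (quantile ν) 2 (volume.restrict (Ioo 0 1)) := by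
  rw [← map_quantile_volume_restrict_Ioo ν] at hν
  exact (memLp_map_measure_iff aestronglyMeasurable_id (aemeasurable_quantile ν)).1 hν

lemma exists_quantile_lt_quantile [IsProbabilityMeasure ν] (hν : 0 < var' ν fun x => x) :
    ∃ u ∈ Ioo (0 : ℝ) 1, ∃ v ∈ Ioo (0 : ℝ) 1, quantile ν u < quantile ν v := by
  by_contra! h
  have hconst : quantile ν =ᵐ[volume.restrict (Ioo 0 1)] fun _ => quantile ν 2⁻¹ := by
    have hhalf : (2⁻¹ : ℝ) ∈ Ioo 0 1 := by norm_num
    filter_upwards [ae_restrict_mem measurableSet_Ioo] with u hu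
    exact le_antisymm (h _ hhalf u hu) (h u hu _ hhalf)
  have hdirac : ν = Measure.dirac (quantile ν 2⁻¹) := by
    conv_lhs => rw [← map_quantile_volume_restrict_Ioo ν]
    rw [Measure.map_congr hconst, Measure.map_const, measure_univ, one_smul]
  rw [hdirac] at hν
  simp [var', cov'] at hν

end Quantile

theorem stmt_13_general {Ω : Type*} [MeasurableSpace Ω] (μ : Measure Ω)
    (U : Ω → ℝ) (hUm : Measurable U)
    (hU : Measure.map U μ = volume.restrict (Set.Ioo (0 : ℝ) 1))
    {d : ℕ} (ν : Fin d → Measure ℝ) (hνp : ∀ i, IsProbabilityMeasure (ν i))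
    (hν2 : ∀ i, MemLp (fun x : ℝ => x) 2 (ν i)) (hνvar : ∀ i, 0 < var' (ν i) (fun x => x))
    (w : Fin d → ℝ) (hw : ∀ i, 0 ≤ w i)
    (hex : ∃ i j, i ≠ j ∧ 0 < w i ∧ 0 < w j) :
    0 < ∑ p ∈ Finset.univ.offDiag, w p.1 * w p.2 *
      cov' μ (fun ω => quantile (ν p.1) (U ω)) (fun ω => quantile (ν p.2) (U ω)) := by
  have hcov : ∀ i j, cov' μ (fun ω => quantile (ν i) (U ω)) (fun ω => quantile (ν j) (U ω))
      = cov' (volume.restrict (Ioo 0 1)) (quantile (ν i)) (quantile (ν j)) := fun i j => by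
    rw [← hU, cov'_map hUm.aemeasurable] <;>
      exact hU ▸ (aemeasurable_quantile _).aestronglyMeasurable
  have hL2 i := memLp_quantile (ν i) (hν2 i)
  have hmono i := monotoneOn_quantile (ν i)
  refine Finset.sum_pos' (fun p _ => ?_) ?_
  · rw [hcov]
    exact mul_nonneg (mul_nonneg (hw _) (hw _)) <| cov'_nonneg_of_monovaryOn (hL2 _) (hL2 _)
      ((hmono _).monovaryOn (hmono _)) (ae_restrict_mem measurableSet_Ioo)
  · obtain ⟨i, j, hij, hwi, hwj⟩ := hex
    refine ⟨(i, j), by simpa using hij, ?_⟩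
    rw [hcov]
    exact mul_pos (mul_pos hwi hwj) <| cov'_pos_of_monotoneOn (hL2 i) (hL2 j) (hmono i) (hmono j)
      (exists_quantile_lt_quantile _ (hνvar i)) (exists_quantile_lt_quantile _ (hνvar j))

theorem stmt_13 {Ω : Type*} [MeasurableSpace Ω] (μ : Measure Ω) [IsProbabilityMeasure μ]
    (U : Ω → ℝ) (hUm : Measurable U)
    (hU : Measure.map U μ = volume.restrict (Set.Ioo (0 : ℝ) 1))
    {d : ℕ} (ν : Fin d → Measure ℝ) (hνp : ∀ i, IsProbabilityMeasure (ν i))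
    (hν2 : ∀ i, MemLp (fun x : ℝ => x) 2 (ν i)) (hνvar : ∀ i, 0 < var' (ν i) (fun x => x))
    (w : Fin d → ℝ) (hw : ∀ i, 0 ≤ w i)
    (hex : ∃ i j, i ≠ j ∧ 0 < w i ∧ 0 < w j) :
    0 < ∑ p ∈ Finset.univ.offDiag, w p.1 * w p.2 *
      cov' μ (fun ω => quantile (ν p.1) (U ω)) (fun ω => quantile (ν p.2) (U ω)) :=
  stmt_13_general μ U hUm hU ν hνp hν2 hνvar w hw hex
end

section
/- Hoeffding's covariance bound: for any square-integrable random variables X and Y with marginal distribution functions F and G, cov(X, Y) ≤ cov(F^{-1}(U), G^{-1}(U)) where U is uniform on (0,1). -/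
open MeasureTheory ProbabilityTheory Real Filter

noncomputable def RHIX {Ω : Type*} [MeasurableSpace Ω] (μ : Measure Ω) (U : Ω → ℝ) {d : ℕ}
    (w : Fin d → ℝ) (X : Fin d → Ω → ℝ) : ℝ :=
  (∑ p ∈ Finset.univ.offDiag, w p.1 * w p.2 * cov' μ (X p.1) (X p.2)) /
  (∑ p ∈ Finset.univ.offDiag, w p.1 * w p.2 * cov' μ (comono μ U (X p.1)) (comono μ U (X p.2)))

/-!
Write `(X, Y)` and an independent copy `(X', Y')` on `Ω × Ω`. Since
`X - X' = ∫ (𝟙[X' ≤ s] - 𝟙[X ≤ s]) ds`, Fubini turns `E[(X - X')(Y - Y')] = 2 cov(X, Y)` into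
Hoeffding's identity `cov(X, Y) = ∫∫ (H(s, t) - F(s) G(t)) ds dt`, where `H` is the joint
distribution function. For `u ∈ (0, 1)` one has `F⁻¹(u) ≤ x ↔ u ≤ F(x)`, so the comonotone pair
`(F⁻¹(U), G⁻¹(U))` has marginals `F`, `G` and joint distribution function `min(F, G) ≥ H`;
comparing the two Hoeffding integrands pointwise gives the bound.
-/

open Set

noncomputable def stepDiff (a a' s : ℝ) : ℝ :=
  (if a' ≤ s then 1 else 0) - (if a ≤ s then 1 else 0)

lemma stepDiff_eq_indicator_sub (a a' : ℝ) :
    stepDiff a a' = (Ico a' a).indicator 1 - (Ico a a').indicator 1 := by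
  ext s
  simp only [stepDiff, Pi.sub_apply, indicator_apply, mem_Ico, Pi.one_apply]
  split_ifs <;> grind

lemma norm_stepDiff (a a' : ℝ) :
    (fun s => ‖stepDiff a a' s‖) = (Ico a' a).indicator 1 + (Ico a a').indicator 1 := by
  ext s
  simp only [stepDiff, Real.norm_eq_abs, Pi.add_apply, indicator_apply, mem_Ico, Pi.one_apply]
  split_ifs <;> grind

lemma integrable_indicator_one_Ico (c d : ℝ) : Integrable ((Ico c d).indicator (1 : ℝ → ℝ)) :=
  (integrable_indicator_iff measurableSet_Ico).2 (integrableOn_const measure_Ico_lt_top.ne)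

lemma integrable_stepDiff (a a' : ℝ) : Integrable (stepDiff a a') := by
  rw [stepDiff_eq_indicator_sub]
  exact (integrable_indicator_one_Ico _ _).sub (integrable_indicator_one_Ico _ _)

lemma integral_stepDiff (a a' : ℝ) : ∫ s, stepDiff a a' s = a - a' := by
  rw [stepDiff_eq_indicator_sub, integral_sub' (integrable_indicator_one_Ico _ _)
    (integrable_indicator_one_Ico _ _), integral_indicator_one measurableSet_Ico,
    integral_indicator_one measurableSet_Ico, Real.volume_real_Ico, Real.volume_real_Ico,
    ← neg_sub a a', max_zero_sub_max_neg_zero_eq_self]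

lemma integral_norm_stepDiff (a a' : ℝ) : ∫ s, ‖stepDiff a a' s‖ = |a - a'| := by
  rw [norm_stepDiff, integral_add' (integrable_indicator_one_Ico _ _)
    (integrable_indicator_one_Ico _ _), integral_indicator_one measurableSet_Ico,
    integral_indicator_one measurableSet_Ico, Real.volume_real_Ico, Real.volume_real_Ico,
    ← neg_sub a a', max_zero_add_max_neg_zero_eq_abs_self]

lemma measurable_stepDiff : Measurable fun q : ℝ × ℝ × ℝ => stepDiff q.1 q.2.1 q.2.2 := by
  have step : ∀ f g : ℝ × ℝ × ℝ → ℝ, Measurable f → Measurable g →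
      Measurable fun q => if f q ≤ g q then (1 : ℝ) else 0 := fun f g hf hg =>
    Measurable.ite (measurableSet_le hf hg) measurable_const measurable_const
  exact (step _ _ (by fun_prop) (by fun_prop)).sub (step _ _ (by fun_prop) (by fun_prop))

lemma integrable_stepDiff_mul_stepDiff (a a' b b' : ℝ) :
    Integrable fun p : ℝ × ℝ => stepDiff a a' p.1 * stepDiff b b' p.2 := by
  rw [Measure.volume_eq_prod]
  exact (integrable_stepDiff a a').mul_prod (integrable_stepDiff b b')

lemma integral_stepDiff_mul_stepDiff (a a' b b' : ℝ) :
    ∫ p : ℝ × ℝ, stepDiff a a' p.1 * stepDiff b b' p.2 = (a - a') * (b - b') := by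
  rw [Measure.volume_eq_prod, integral_prod_mul, integral_stepDiff, integral_stepDiff]

lemma integral_norm_stepDiff_mul_stepDiff (a a' b b' : ℝ) :
    ∫ p : ℝ × ℝ, ‖stepDiff a a' p.1 * stepDiff b b' p.2‖ = |a - a'| * |b - b'| := by
  simp_rw [norm_mul]
  rw [Measure.volume_eq_prod, integral_prod_mul (fun s => ‖stepDiff a a' s‖)
    (fun t => ‖stepDiff b b' t‖), integral_norm_stepDiff, integral_norm_stepDiff]

section Covariance

variable {Ω : Type*} [MeasurableSpace Ω] {μ : Measure Ω} {X Y : Ω → ℝ}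

lemma cov'_congr_ae {X' Y' : Ω → ℝ} (hX : X =ᵐ[μ] X') (hY : Y =ᵐ[μ] Y') :
    cov' μ X Y = cov' μ X' Y' := by
  rw [cov', cov', integral_congr_ae (f := fun ω => X ω * Y ω) (hX.mul hY), integral_congr_ae hX,
    integral_congr_ae hY]
  rfl

lemma cov'_indicator_one {A B : Set Ω} (hA : MeasurableSet A) (hB : MeasurableSet B) :
    cov' μ (A.indicator 1) (B.indicator 1) = μ.real (A ∩ B) - μ.real A * μ.real B := by
  have hAB : (fun ω => A.indicator 1 ω * B.indicator 1 ω) = (A ∩ B).indicator (1 : Ω → ℝ) := by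
    rw [inter_indicator_one]; rfl
  rw [cov', hAB, integral_indicator_one hA, integral_indicator_one hB,
    integral_indicator_one (hA.inter hB)]

noncomputable def hoeffdingKernel (μ : Measure Ω) (X Y : Ω → ℝ) (p : ℝ × ℝ) : ℝ :=
  μ.real {ω | X ω ≤ p.1 ∧ Y ω ≤ p.2} - μ.real {ω | X ω ≤ p.1} * μ.real {ω | Y ω ≤ p.2}

-- Integrating out `p` gives `(X ω - X ω') * (Y ω - Y ω')`, integrating out `(ω, ω')` gives
-- `2 * hoeffdingKernel μ X Y p`; Fubini then yields Hoeffding's identity.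
noncomputable def hoeffdingIntegrand (X Y : Ω → ℝ) (q : (Ω × Ω) × (ℝ × ℝ)) : ℝ :=
  stepDiff (X q.1.1) (X q.1.2) q.2.1 * stepDiff (Y q.1.1) (Y q.1.2) q.2.2

variable [IsProbabilityMeasure μ]

lemma cdf_map (hXm : Measurable X) (x : ℝ) : cdf (μ.map X) x = μ.real {ω | X ω ≤ x} := by
  have := Measure.isProbabilityMeasure_map (μ := μ) hXm.aemeasurable
  rw [cdf_eq_real, map_measureReal_apply hXm measurableSet_Iic]
  rfl

lemma identDistrib_of_measureReal_le_eq {Z : Ω → ℝ} (hXm : Measurable X) (hZm : Measurable Z)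
    (h : ∀ x, μ.real {ω | Z ω ≤ x} = μ.real {ω | X ω ≤ x}) : IdentDistrib Z X μ μ := by
  have := Measure.isProbabilityMeasure_map (μ := μ) hXm.aemeasurable
  have := Measure.isProbabilityMeasure_map (μ := μ) hZm.aemeasurable
  refine ⟨hZm.aemeasurable, hXm.aemeasurable, Measure.eq_of_cdf _ _ ?_⟩
  ext x
  rw [cdf_map hZm, cdf_map hXm, h]

lemma integral_prod_sub_mul_sub {f g : Ω → ℝ} (hf : MemLp f 2 μ) (hg : MemLp g 2 μ) :
    ∫ w, (f w.1 - f w.2) * (g w.1 - g w.2) ∂μ.prod μ = 2 * cov' μ f g := by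
  have hfg : Integrable (f * g) μ := hf.integrable_mul hg
  have hf1 : Integrable f μ := hf.integrable one_le_two
  have hg1 : Integrable g μ := hg.integrable one_le_two
  have expand : ∀ w : Ω × Ω, (f w.1 - f w.2) * (g w.1 - g w.2)
      = (f * g) w.1 + (f * g) w.2 - (f w.1 * g w.2 + g w.1 * f w.2) := fun w => by
    simp only [Pi.mul_apply]; ring
  have h₁ := hfg.comp_fst μ
  have h₂ := hfg.comp_snd μ
  have h₃ := hf1.mul_prod hg1
  have h₄ := hg1.mul_prod hf1
  simp_rw [expand]
  rw [integral_sub, integral_add h₁ h₂, integral_add h₃ h₄, integral_fun_fst, integral_fun_snd,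
    integral_prod_mul, integral_prod_mul, cov']
  · simp only [probReal_univ, one_smul, Pi.mul_apply]
    ring
  exacts [h₁.add h₂, h₃.add h₄]

lemma integral_prod_stepDiff_mul_stepDiff (hXm : Measurable X) (hYm : Measurable Y) (p : ℝ × ℝ) :
    ∫ w, stepDiff (X w.1) (X w.2) p.1 * stepDiff (Y w.1) (Y w.2) p.2 ∂μ.prod μ
      = 2 * hoeffdingKernel μ X Y p := by
  set A := {ω | X ω ≤ p.1}
  set B := {ω | Y ω ≤ p.2}
  have hA : MeasurableSet A := hXm measurableSet_Iic
  have hB : MeasurableSet B := hYm measurableSet_Iic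
  have hstep : ∀ w : Ω × Ω, stepDiff (X w.1) (X w.2) p.1 * stepDiff (Y w.1) (Y w.2) p.2
      = (A.indicator 1 w.1 - A.indicator 1 w.2) * (B.indicator 1 w.1 - B.indicator 1 w.2) := by
    intro w
    simp only [stepDiff, indicator_apply, A, B, mem_ofPred_eq, Pi.one_apply]
    split_ifs <;> norm_num
  simp_rw [hstep]
  rw [integral_prod_sub_mul_sub (f := A.indicator 1) (g := B.indicator 1)
    (memLp_indicator_const 2 hA 1 (Or.inr (measure_ne_top _ _)))
    (memLp_indicator_const 2 hB 1 (Or.inr (measure_ne_top _ _))), cov'_indicator_one hA hB]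
  rfl

lemma integrable_hoeffdingIntegrand (hXm : Measurable X) (hYm : Measurable Y)
    (hX : MemLp X 2 μ) (hY : MemLp Y 2 μ) :
    Integrable (hoeffdingIntegrand X Y) ((μ.prod μ).prod volume) := by
  have hmeas : Measurable (hoeffdingIntegrand X Y) :=
    (measurable_stepDiff.comp (f := fun q : (Ω × Ω) × (ℝ × ℝ) => (X q.1.1, X q.1.2, q.2.1))
      (by fun_prop)).mul
    (measurable_stepDiff.comp (f := fun q : (Ω × Ω) × (ℝ × ℝ) => (Y q.1.1, Y q.1.2, q.2.2))
      (by fun_prop))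
  rw [integrable_prod_iff hmeas.aestronglyMeasurable]
  refine ⟨.of_forall fun w =>
    integrable_stepDiff_mul_stepDiff (X w.1) (X w.2) (Y w.1) (Y w.2), ?_⟩
  simp only [hoeffdingIntegrand, integral_norm_stepDiff_mul_stepDiff, ← abs_mul]
  exact (((hX.comp_fst μ).sub (hX.comp_snd μ)).integrable_mul
    ((hY.comp_fst μ).sub (hY.comp_snd μ))).abs

theorem integrable_hoeffdingKernel (hXm : Measurable X) (hYm : Measurable Y)
    (hX : MemLp X 2 μ) (hY : MemLp Y 2 μ) : Integrable (hoeffdingKernel μ X Y) := by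
  have h := (integrable_hoeffdingIntegrand hXm hYm hX hY).integral_prod_right
  simp only [hoeffdingIntegrand, integral_prod_stepDiff_mul_stepDiff hXm hYm] at h
  exact (integrable_const_mul_iff (isUnit_iff_ne_zero.2 two_ne_zero) _).1 h

theorem cov'_eq_integral_hoeffdingKernel (hXm : Measurable X) (hYm : Measurable Y)
    (hX : MemLp X 2 μ) (hY : MemLp Y 2 μ) : cov' μ X Y = ∫ p, hoeffdingKernel μ X Y p := by
  have h := integral_integral_swap (f := fun w p => hoeffdingIntegrand X Y (w, p))
    (integrable_hoeffdingIntegrand hXm hYm hX hY)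
  simp only [hoeffdingIntegrand, integral_stepDiff_mul_stepDiff,
    integral_prod_stepDiff_mul_stepDiff hXm hYm, integral_prod_sub_mul_sub hX hY,
    integral_const_mul] at h
  linarith

theorem cov'_le_cov'_of_identDistrib {Z W : Ω → ℝ} (hXm : Measurable X) (hYm : Measurable Y)
    (hZm : Measurable Z) (hWm : Measurable W) (hX : MemLp X 2 μ) (hY : MemLp Y 2 μ)
    (hZX : IdentDistrib Z X μ μ) (hWY : IdentDistrib W Y μ μ)
    (hjoint : ∀ s t, μ.real {ω | X ω ≤ s ∧ Y ω ≤ t} ≤ μ.real {ω | Z ω ≤ s ∧ W ω ≤ t}) :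
    cov' μ X Y ≤ cov' μ Z W := by
  rw [cov'_eq_integral_hoeffdingKernel hXm hYm hX hY,
    cov'_eq_integral_hoeffdingKernel hZm hWm (hZX.symm.memLp_snd hX) (hWY.symm.memLp_snd hY)]
  refine integral_mono (integrable_hoeffdingKernel hXm hYm hX hY)
    (integrable_hoeffdingKernel hZm hWm (hZX.symm.memLp_snd hX) (hWY.symm.memLp_snd hY))
    fun p => ?_
  have hZ : μ.real {ω | Z ω ≤ p.1} = μ.real {ω | X ω ≤ p.1} :=
    congrArg ENNReal.toReal (hZX.measure_mem_eq measurableSet_Iic)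
  have hW : μ.real {ω | W ω ≤ p.2} = μ.real {ω | Y ω ≤ p.2} :=
    congrArg ENNReal.toReal (hWY.measure_mem_eq measurableSet_Iic)
  simp only [hoeffdingKernel, hZ, hW]
  linarith [hjoint p.1 p.2]

end Covariance

lemma quantile_le_iff_s15 (ν : Measure ℝ) [IsProbabilityMeasure ν] {u : ℝ} (hu : u ∈ Ioo 0 1)
    (x : ℝ) : quantile ν u ≤ x ↔ u ≤ cdf ν x := by
  set S := {y | u ≤ cdf ν y}
  have hne : S.Nonempty := ((tendsto_cdf_atTop ν).eventually_const_le hu.2).exists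
  have hbdd : BddBelow S := by
    obtain ⟨z, hz⟩ := ((tendsto_cdf_atBot ν).eventually_lt_const hu.1).exists
    exact ⟨z, fun y hy => le_of_not_gt fun hyz => hz.not_ge (hy.trans (monotone_cdf ν hyz.le))⟩
  -- `S` contains its infimum by right-continuity of `cdf ν`
  have hmem : u ≤ cdf ν (sInf S) := by
    refine ge_of_tendsto (((cdf ν).right_continuous _).mono_left
      (nhdsWithin_mono _ Ioi_subset_Ici_self)) ?_
    filter_upwards [self_mem_nhdsWithin] with y hy
    obtain ⟨z, hz, hzy⟩ := (csInf_lt_iff hbdd hne).1 hy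
    exact hz.trans (monotone_cdf ν hzy.le)
  exact ⟨fun hx => hmem.trans (monotone_cdf ν hx), fun hx => csInf_le hbdd hx⟩

-- Measurability of `quantile ν` itself is awkward near the endpoints; a uniform `U` almost surely
-- stays in `(0, 1)`, where this version agrees with it.
noncomputable def quantileIoo (ν : Measure ℝ) (p : ℝ) : ℝ :=
  if p ∈ Ioo 0 1 then quantile ν p else 0

lemma measurable_quantileIoo (ν : Measure ℝ) [IsProbabilityMeasure ν] :
    Measurable (quantileIoo ν) := by
  refine measurable_of_Iic fun x => ?_
  have h : quantileIoo ν ⁻¹' Iic x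
      = (Ioo 0 1 ∩ Iic (cdf ν x)) ∪ ((Ioo 0 1)ᶜ ∩ {_p | 0 ≤ x}) := by
    ext p
    by_cases hp : p ∈ Ioo 0 1
    · simp [quantileIoo, hp, quantile_le_iff_s15 ν hp]
    · simp [quantileIoo, hp]
  rw [h]
  exact (measurableSet_Ioo.inter measurableSet_Iic).union
    (measurableSet_Ioo.compl.inter (MeasurableSet.const _))

section Uniform

variable {Ω : Type*} [MeasurableSpace Ω] {μ : Measure Ω} {U : Ω → ℝ}

lemma ae_mem_Ioo_of_map_eq (hUm : Measurable U)
    (hU : μ.map U = volume.restrict (Ioo 0 1)) : ∀ᵐ ω ∂μ, U ω ∈ Ioo 0 1 := by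
  have h : ∀ᵐ p ∂μ.map U, p ∈ Ioo (0 : ℝ) 1 := by
    rw [hU]
    exact ae_restrict_mem measurableSet_Ioo
  exact (ae_map_iff hUm.aemeasurable measurableSet_Ioo).1 h

lemma measureReal_le_of_map_eq (hUm : Measurable U)
    (hU : μ.map U = volume.restrict (Ioo 0 1)) {m : ℝ} (hm0 : 0 ≤ m) (hm1 : m ≤ 1) :
    μ.real {ω | U ω ≤ m} = m := by
  rw [Measure.restrict_congr_set Ioo_ae_eq_Ioc] at hU
  change μ.real (U ⁻¹' Iic m) = m
  rw [← map_measureReal_apply hUm measurableSet_Iic, hU,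
    measureReal_restrict_apply measurableSet_Iic, Iic_inter_Ioc_of_le hm1,
    Real.volume_real_Ioc_of_le hm0, sub_zero]

lemma comono_ae_eq (hUm : Measurable U) (hU : μ.map U = volume.restrict (Ioo 0 1))
    (X : Ω → ℝ) : comono μ U X =ᵐ[μ] fun ω => quantileIoo (μ.map X) (U ω) := by
  filter_upwards [ae_mem_Ioo_of_map_eq hUm hU] with ω hω
  simp [comono, quantileIoo, hω]

lemma measureReal_quantileIoo_comp_le_and (hUm : Measurable U)
    (hU : μ.map U = volume.restrict (Ioo 0 1)) (ν ν' : Measure ℝ) [IsProbabilityMeasure ν]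
    [IsProbabilityMeasure ν'] (s t : ℝ) :
    μ.real {ω | quantileIoo ν (U ω) ≤ s ∧ quantileIoo ν' (U ω) ≤ t}
      = min (cdf ν s) (cdf ν' t) := by
  rw [← measureReal_le_of_map_eq hUm hU (le_min (cdf_nonneg ν s) (cdf_nonneg ν' t))
    (min_le_of_left_le (cdf_le_one ν s))]
  refine measureReal_congr (eventuallyEq_set.2 ?_)
  filter_upwards [ae_mem_Ioo_of_map_eq hUm hU] with ω hω
  simp only [quantileIoo, if_pos hω, quantile_le_iff_s15 _ hω, le_min_iff]

lemma identDistrib_quantileIoo_comp [IsProbabilityMeasure μ] (hUm : Measurable U)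
    (hU : μ.map U = volume.restrict (Ioo 0 1)) {X : Ω → ℝ} (hXm : Measurable X) :
    IdentDistrib (fun ω => quantileIoo (μ.map X) (U ω)) X μ μ := by
  have := Measure.isProbabilityMeasure_map (μ := μ) hXm.aemeasurable
  refine identDistrib_of_measureReal_le_eq hXm ((measurable_quantileIoo _).comp hUm) fun x => ?_
  simpa [cdf_map hXm] using measureReal_quantileIoo_comp_le_and hUm hU (μ.map X) (μ.map X) x x

end Uniform

theorem stmt_15 {Ω : Type*} [MeasurableSpace Ω] (μ : Measure Ω) [IsProbabilityMeasure μ]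
    (U : Ω → ℝ) (hUm : Measurable U)
    (hU : Measure.map U μ = volume.restrict (Set.Ioo (0 : ℝ) 1))
    (X Y : Ω → ℝ) (hXm : Measurable X) (hYm : Measurable Y)
    (hX : MemLp X 2 μ) (hY : MemLp Y 2 μ) :
    cov' μ X Y ≤ cov' μ (comono μ U X) (comono μ U Y) := by
  have := Measure.isProbabilityMeasure_map (μ := μ) hXm.aemeasurable
  have := Measure.isProbabilityMeasure_map (μ := μ) hYm.aemeasurable
  rw [cov'_congr_ae (comono_ae_eq hUm hU X) (comono_ae_eq hUm hU Y)]
  refine cov'_le_cov'_of_identDistrib hXm hYm ((measurable_quantileIoo _).comp hUm)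
    ((measurable_quantileIoo _).comp hUm) hX hY (identDistrib_quantileIoo_comp hUm hU hXm)
    (identDistrib_quantileIoo_comp hUm hU hYm) fun s t => ?_
  rw [measureReal_quantileIoo_comp_le_and hUm hU, cdf_map hXm, cdf_map hYm]
  exact le_min (measureReal_mono fun ω hω => hω.1) (measureReal_mono fun ω hω => hω.2)
end

section
/- In the two-asset lognormal model with independent assets (ρ = 0), HIX tends to 1 as the volatility of the second asset tends to infinity: with equal weights and fixed σ_1 > 0, HIX = (w_1²σ_{X_1}² + w_2²σ_{X_2}²)/(w_1²σ_{X_1}² + w_2²σ_{X_2}² + 2w_1 w_2 σ_{X_1}σ_{X_2} c(σ_1, σ_2)) → 1 as σ_2 → ∞, where c(σ_1, σ_2) = (exp(σ_1σ_2 t) − 1)/(sqrt(exp(σ_1²t) −1) sqrt(exp(σ_2²t)−1)) and σ_{X_2}²/σ_{X_2}² normalization makes the cross term negligible. -/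
/-!
The cross term of the denominator, once the square roots cancel, is a constant multiple of
`exp (σ₁ σ₂ t) - 1`, whereas the `σ₂`-part of the variance is a multiple of `exp (σ₂² t) - 1`.
Since `σ₂² t - σ₁ σ₂ t → ∞`, the first is `o` of the second, and a ratio `u / (u + v)` with
`v = o(u)` tends to `1`.
-/

open Filter Real Asymptotics Topology

theorem tendsto_div_add_nhds_one_of_isLittleO {α 𝕜 : Type*} [NormedField 𝕜] {l : Filter α}
    {u v : α → 𝕜} (hu : ∀ᶠ x in l, u x ≠ 0) (h : v =o[l] u) :
    Tendsto (fun x => u x / (u x + v x)) l (𝓝 1) := by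
  have hratio : Tendsto (fun x => (u x + v x) / u x) l (𝓝 1) := by
    have hsum := (tendsto_const_nhds (x := (1 : 𝕜))).add h.tendsto_div_nhds_zero
    rw [add_zero] at hsum
    refine hsum.congr' ?_
    filter_upwards [hu] with x hx
    rw [add_div, div_self hx]
  simpa only [inv_div, inv_one] using hratio.inv₀ one_ne_zero

theorem isBigO_const_add_self {α : Type*} {l : Filter α} {a : ℝ} {f : α → ℝ} (ha : 0 ≤ a)
    (hf : ∀ᶠ x in l, 0 ≤ f x) : f =O[l] fun x => a + f x :=
  IsBigO.of_bound 1 <| hf.mono fun x hx => by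
    rw [Real.norm_of_nonneg hx, Real.norm_of_nonneg (by positivity), one_mul]
    linarith

theorem isLittleO_exp_comp_sub_one {α : Type*} {l : Filter α} {f g : α → ℝ}
    (hg : Tendsto g l atTop) (hgf : Tendsto (fun x => g x - f x) l atTop) :
    (fun x => exp (f x) - 1) =o[l] fun x => exp (g x) - 1 := by
  have hone : (fun _ => (1 : ℝ)) =o[l] fun x => exp (g x) := by
    rw [isLittleO_one_left_iff]
    simp only [Real.norm_eq_abs, abs_exp]
    exact tendsto_exp_atTop.comp hg
  have hequiv : (fun x => exp (g x) - 1) ~[l] fun x => exp (g x) :=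
    IsEquivalent.refl.sub_isLittleO hone
  exact ((isLittleO_exp_comp_exp_comp.2 hgf).sub hone).trans_isBigO hequiv.symm.isBigO

theorem sqrt_exp_sq_mul_sub_one_pos {σ t : ℝ} (ht : 0 < t) (hσ : σ ≠ 0) :
    0 < sqrt (exp (σ ^ 2 * t) - 1) :=
  sqrt_pos.2 (sub_pos.2 (one_lt_exp_iff.2 (by positivity)))

theorem mul_sqrt_exp_sq_mul_sub_one_sq (c σ : ℝ) {t : ℝ} (ht : 0 ≤ t) :
    (c * sqrt (exp (σ ^ 2 * t) - 1)) ^ 2 = c ^ 2 * (exp (σ ^ 2 * t) - 1) := by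
  rw [mul_pow, sq_sqrt (sub_nonneg.2 (one_le_exp (by positivity)))]

theorem tendsto_sq_mul_sub_mul_mul_atTop (a : ℝ) {t : ℝ} (ht : 0 < t) :
    Tendsto (fun x => x ^ 2 * t - a * x * t) atTop atTop :=
  ((tendsto_atTop_add_const_right _ (-a) tendsto_id).atTop_mul_atTop₀
    (tendsto_id.atTop_mul_const ht)).congr fun x => by simp only [id]; ring

theorem stmt_18 (t σ₁ r₁ r₂ x₁ x₂ w₁ w₂ : ℝ) (ht : 0 < t) (hσ₁ : 0 < σ₁)
    (hx₁ : 0 < x₁) (hx₂ : 0 < x₂) (hw₁ : 0 < w₁) (hw₂ : 0 < w₂) :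
    Filter.Tendsto (fun σ₂ : ℝ =>
      (w₁ ^ 2 * (x₁ * Real.exp (r₁ * t) * Real.sqrt (Real.exp (σ₁ ^ 2 * t) - 1)) ^ 2 +
        w₂ ^ 2 * (x₂ * Real.exp (r₂ * t) * Real.sqrt (Real.exp (σ₂ ^ 2 * t) - 1)) ^ 2) /
      (w₁ ^ 2 * (x₁ * Real.exp (r₁ * t) * Real.sqrt (Real.exp (σ₁ ^ 2 * t) - 1)) ^ 2 +
        w₂ ^ 2 * (x₂ * Real.exp (r₂ * t) * Real.sqrt (Real.exp (σ₂ ^ 2 * t) - 1)) ^ 2 +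
        2 * w₁ * w₂ * (x₁ * Real.exp (r₁ * t) * Real.sqrt (Real.exp (σ₁ ^ 2 * t) - 1)) *
          (x₂ * Real.exp (r₂ * t) * Real.sqrt (Real.exp (σ₂ ^ 2 * t) - 1)) *
          ((Real.exp (σ₁ * σ₂ * t) - 1) /
            (Real.sqrt (Real.exp (σ₁ ^ 2 * t) - 1) * Real.sqrt (Real.exp (σ₂ ^ 2 * t) - 1)))))
      Filter.atTop (nhds 1) := by
  have hs₁ := sqrt_exp_sq_mul_sub_one_pos ht hσ₁.ne'
  apply tendsto_div_add_nhds_one_of_isLittleO (Eventually.of_forall fun σ₂ => by positivity)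
  refine IsBigO.trans_isLittleO (g := fun σ₂ => exp (σ₁ * σ₂ * t) - 1) ?_ ?_
  · refine (isBigO_const_mul_self
      (2 * w₁ * w₂ * (x₁ * exp (r₁ * t)) * (x₂ * exp (r₂ * t))) _ _).congr' ?_ EventuallyEq.rfl
    filter_upwards [eventually_ne_atTop 0] with σ₂ hσ₂
    have hs₂ := sqrt_exp_sq_mul_sub_one_pos ht hσ₂
    rw [eq_comm, mul_div_assoc', div_eq_iff (mul_ne_zero hs₁.ne' hs₂.ne')]
    ring
  · refine (isLittleO_exp_comp_sub_one ((tendsto_pow_atTop two_ne_zero).atTop_mul_const ht)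
      (tendsto_sq_mul_sub_mul_mul_atTop σ₁ ht)).trans_isBigO ?_
    refine IsBigO.trans ?_
      (isBigO_const_add_self (by positivity) (Eventually.of_forall fun σ₂ => by positivity))
    refine (isBigO_self_const_mul (c := w₂ ^ 2 * (x₂ * exp (r₂ * t)) ^ 2) (by positivity) _ _)
      |>.congr_right fun σ₂ => ?_
    rw [mul_sqrt_exp_sq_mul_sub_one_sq _ _ ht.le, mul_assoc]
end
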